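/- Let G be a simple graph on Fin n and let Ed = { (i,j) : i < j and i, j adjacent in G } be its edge set. Define the simple graph H on the vertex set Fin n ⊕ Ed ⊕ Fin n ⊕ Fin n (vertices L_i for i : Fin n, L_e for e ∈ Ed, A¹_i and A²_i for i : Fin n) whose edges are exactly: {L_e, L_i} and {L_e, L_j} for each e = (i,j) ∈ Ed; {L_e, L_f} for each pair e ≠ f in Ed with the same second coordinate; {A¹_i, L_i} and {A¹_i, A²_i} for each i : Fin n. Then for every natural number k: G has a vertex cover of cardinality at most k if and only if H has a dominating set of cardinality at most k + n. -/

import Mathlib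

/-- The vertex set of the reduction graph: vertex frames `L_i`, edge frames `L_e` for
edges `e = (i,j)` with `i < j`, and auxiliary frames `A¹_i` and `A²_i`. -/
def Vtx17 (n : ℕ) (G : SimpleGraph (Fin n)) :=
  Fin n ⊕ ({p : Fin n × Fin n // p.1 < p.2 ∧ G.Adj p.1 p.2} ⊕ (Fin n ⊕ Fin n))

/-- Base relation generating the edges of the reduction graph: `L_e ~ L_i` and `L_e ~ L_j`
for `e = (i,j)`; `L_e ~ L_f` for distinct edges with the same second (larger) coordinate;
`A¹_i ~ L_i` and `A¹_i ~ A²_i`. -/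
def rel17 {n : ℕ} (G : SimpleGraph (Fin n)) : Vtx17 n G → Vtx17 n G → Prop
  | Sum.inr (Sum.inl e), Sum.inl i => e.val.1 = i ∨ e.val.2 = i
  | Sum.inr (Sum.inl e), Sum.inr (Sum.inl f) => e.val.2 = f.val.2
  | Sum.inr (Sum.inr (Sum.inl i)), Sum.inl i' => i = i'
  | Sum.inr (Sum.inr (Sum.inl i)), Sum.inr (Sum.inr (Sum.inr i')) => i = i'
  | _, _ => False

/-- The reduction graph `H`. -/
def H17 {n : ℕ} (G : SimpleGraph (Fin n)) : SimpleGraph (Vtx17 n G) :=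
  SimpleGraph.fromRel (rel17 G)

/-- A set of vertices is a dominating set: every vertex is in it or adjacent to a member. -/
def IsDomSet {V : Type*} (G : SimpleGraph V) (D : Set V) : Prop :=
  ∀ v, v ∈ D ∨ ∃ u ∈ D, G.Adj u v

/-!
A vertex cover `C` of `G` gives the dominating set `{L_i | i ∈ C} ∪ {A¹_i | i}` of `H`: the
`A¹_i` dominate all vertex frames and all `A²_i`, and an edge frame `L_e` is dominated
by the vertex frame of an endpoint of `e` lying in `C`.

Conversely, since `A²_i` is a pendant vertex hanging at `A¹_i`, a dominating set `D` contains
one of them for every `i`, so at most `|D| - n` members of `D` are frames. Sending every frame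
to its vertex (an edge frame to the larger endpoint of its edge) maps these onto a vertex
cover: the neighbours of `L_e` are `L_i`, `L_j` and the edge frames sharing the endpoint `j`.
-/

open Finset

theorem IsDomSet.mem_or_mem_of_forall_adj_eq {V : Type*} {H : SimpleGraph V} {D : Set V}
    (hD : IsDomSet H D) {u v : V} (hv : ∀ w, H.Adj w v → w = u) : u ∈ D ∨ v ∈ D := by
  rcases hD v with hvD | ⟨w, hwD, hwv⟩
  · exact Or.inr hvD
  · exact Or.inl (hv w hwv ▸ hwD)

namespace Vtx17

variable {n : ℕ} {G : SimpleGraph (Fin n)}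

instance : DecidableEq (Vtx17 n G) :=
  inferInstanceAs (DecidableEq (Fin n ⊕ _))

abbrev vertexFrame (i : Fin n) : Vtx17 n G := Sum.inl i

abbrev edgeFrame (e : {p : Fin n × Fin n // p.1 < p.2 ∧ G.Adj p.1 p.2}) : Vtx17 n G :=
  Sum.inr (Sum.inl e)

abbrev aux₁ (i : Fin n) : Vtx17 n G := Sum.inr (Sum.inr (Sum.inl i))

abbrev aux₂ (i : Fin n) : Vtx17 n G := Sum.inr (Sum.inr (Sum.inr i))

def isFrame : Vtx17 n G → Bool
  | Sum.inl _ => true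
  | Sum.inr (Sum.inl _) => true
  | Sum.inr (Sum.inr _) => false

def toVertex : Vtx17 n G → Fin n
  | Sum.inl i => i
  | Sum.inr (Sum.inl e) => e.val.2
  | Sum.inr (Sum.inr (Sum.inl i)) => i
  | Sum.inr (Sum.inr (Sum.inr i)) => i

theorem H17_adj_iff {u v : Vtx17 n G} :
    (H17 G).Adj u v ↔ u ≠ v ∧ (rel17 G u v ∨ rel17 G v u) :=
  SimpleGraph.fromRel_adj _ _ _

theorem eq_aux₁_of_adj_aux₂ {u : Vtx17 n G} {i : Fin n} (h : (H17 G).Adj u (aux₂ i)) :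
    u = aux₁ i := by
  obtain ⟨-, h | h⟩ := H17_adj_iff.mp h <;>
    rcases u with _ | _ | j | _ <;> simp only [rel17] at h
  exact h ▸ rfl

theorem isFrame_and_toVertex_of_adj_edgeFrame {u : Vtx17 n G}
    {e : {p : Fin n × Fin n // p.1 < p.2 ∧ G.Adj p.1 p.2}} (h : (H17 G).Adj u (edgeFrame e)) :
    u.isFrame ∧ (u.toVertex = e.val.1 ∨ u.toVertex = e.val.2) := by
  rw [H17_adj_iff] at h
  rcases u with _ | _ | _ | _ <;> simp_all [rel17, isFrame, toVertex, eq_comm]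

def dominatingSetOfCover (C : Finset (Fin n)) : Finset (Vtx17 n G) :=
  C.image vertexFrame ∪ univ.image aux₁

theorem card_dominatingSetOfCover_le (C : Finset (Fin n)) :
    (dominatingSetOfCover (G := G) C).card ≤ C.card + n :=
  calc _ ≤ (C.image vertexFrame).card + (univ.image (aux₁ (G := G))).card := card_union_le _ _
    _ ≤ C.card + (univ : Finset (Fin n)).card := add_le_add card_image_le card_image_le
    _ = C.card + n := by rw [card_univ, Fintype.card_fin]

theorem isDomSet_dominatingSetOfCover {C : Finset (Fin n)} (hC : G.IsVertexCover C) :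
    IsDomSet (H17 G) ↑(dominatingSetOfCover (G := G) C) := by
  have haux : ∀ i, aux₁ i ∈ dominatingSetOfCover (G := G) C := fun i =>
    mem_union_right _ (mem_image_of_mem _ (mem_univ i))
  have hcover : ∀ i ∈ C, vertexFrame i ∈ dominatingSetOfCover (G := G) C := fun i hi =>
    mem_union_left _ (mem_image_of_mem _ hi)
  rintro (i | ⟨⟨i, j⟩, hij, hG⟩ | i | i)
  · exact Or.inr ⟨aux₁ i, haux i, H17_adj_iff.mpr ⟨nofun, Or.inl rfl⟩⟩
  · rcases hC hG with hi | hj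
    · exact Or.inr ⟨vertexFrame i, hcover i hi,
        H17_adj_iff.mpr ⟨nofun, Or.inr (Or.inl rfl)⟩⟩
    · exact Or.inr ⟨vertexFrame j, hcover j hj,
        H17_adj_iff.mpr ⟨nofun, Or.inr (Or.inr rfl)⟩⟩
  · exact Or.inl (haux i)
  · exact Or.inr ⟨aux₁ i, haux i, H17_adj_iff.mpr ⟨nofun, Or.inl rfl⟩⟩

theorem le_card_filter_not_isFrame {D : Finset (Vtx17 n G)} (hD : IsDomSet (H17 G) ↑D) :
    n ≤ (D.filter fun v => ¬v.isFrame).card := by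
  have hsurj : univ ⊆ (D.filter fun v => ¬v.isFrame).image toVertex := by
    intro i _
    rcases hD.mem_or_mem_of_forall_adj_eq (u := aux₁ i) (v := aux₂ i)
      (fun _ => eq_aux₁_of_adj_aux₂) with h | h
    · exact mem_image.mpr ⟨aux₁ i, mem_filter.mpr ⟨h, nofun⟩, rfl⟩
    · exact mem_image.mpr ⟨aux₂ i, mem_filter.mpr ⟨h, nofun⟩, rfl⟩
  calc n = (univ : Finset (Fin n)).card := (card_fin n).symm
    _ ≤ _ := card_le_card hsurj
    _ ≤ _ := card_image_le

def coverOfDominatingSet (D : Finset (Vtx17 n G)) : Finset (Fin n) :=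
  (D.filter fun v => v.isFrame).image toVertex

theorem card_coverOfDominatingSet_add_le {D : Finset (Vtx17 n G)} (hD : IsDomSet (H17 G) ↑D) :
    (coverOfDominatingSet D).card + n ≤ D.card :=
  calc _ ≤ (D.filter fun v => v.isFrame).card + (D.filter fun v => ¬v.isFrame).card :=
        add_le_add card_image_le (le_card_filter_not_isFrame hD)
    _ = D.card := card_filter_add_card_filter_not _

theorem isVertexCover_coverOfDominatingSet {D : Finset (Vtx17 n G)}
    (hD : IsDomSet (H17 G) ↑D) : G.IsVertexCover ↑(coverOfDominatingSet D) := by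
  have hmem : ∀ u ∈ D, u.isFrame → u.toVertex ∈ coverOfDominatingSet D := fun u hu hf =>
    mem_image_of_mem _ (mem_filter.mpr ⟨hu, hf⟩)
  have hlt : ∀ i j, i < j → G.Adj i j →
      i ∈ coverOfDominatingSet D ∨ j ∈ coverOfDominatingSet D := by
    intro i j hij hG
    rcases hD (edgeFrame ⟨(i, j), hij, hG⟩) with h | ⟨u, hu, hadj⟩
    · exact Or.inr (hmem _ h rfl)
    · obtain ⟨hf, hi | hj⟩ : u.isFrame ∧ (u.toVertex = i ∨ u.toVertex = j) :=
        isFrame_and_toVertex_of_adj_edgeFrame hadj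
      · exact Or.inl (hi ▸ hmem u hu hf)
      · exact Or.inr (hj ▸ hmem u hu hf)
  intro i j hG
  rcases hG.ne.lt_or_gt with h | h
  · exact hlt i j h hG
  · exact (hlt j i h hG.symm).symm

end Vtx17

/-- `G` has a vertex cover of cardinality at most `k` iff the reduction graph `H` has a
dominating set of cardinality at most `k + n`. -/
theorem vertex_cover_iff_domset (n : ℕ) (G : SimpleGraph (Fin n)) (k : ℕ) :
    (∃ C : Finset (Fin n), C.card ≤ k ∧ ∀ i j, G.Adj i j → i ∈ C ∨ j ∈ C) ↔
      (∃ D : Finset (Vtx17 n G), D.card ≤ k + n ∧ IsDomSet (H17 G) ↑D) := by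
  constructor
  · rintro ⟨C, hCk, hC⟩
    exact ⟨Vtx17.dominatingSetOfCover C, (Vtx17.card_dominatingSetOfCover_le C).trans (by omega),
      Vtx17.isDomSet_dominatingSetOfCover fun i j => hC i j⟩
  · rintro ⟨D, hDk, hD⟩
    have hcard := Vtx17.card_coverOfDominatingSet_add_le hD
    exact ⟨Vtx17.coverOfDominatingSet D, by omega,
      fun _ _ hG => Vtx17.isVertexCover_coverOfDominatingSet hD hG⟩
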